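/- (Bruns.) Let n ≥ 1 and let r_0, r_1, …, r_n be nonnegative integers, and consider the format (f_0, …, f_n) = (r_0 + r_1, r_1 + r_2, …, r_{n−1} + r_n, r_n). Then there exists a generic pair for this format over ℂ: a commutative ℂ-algebra R_gen together with an acyclic complex F^gen of finite free R_gen-modules of this format such that for every commutative ℂ-algebra S and every acyclic complex G of finite free S-modules of the same format, there exists a (not necessarily unique) ℂ-algebra homomorphism R_gen → S specializing F^gen to G. -/

import Mathlib

/-!
STATEMENT 16 (Bruns): For every format (r₀ + r₁, r₁ + r₂, …, r_{n−1} + r_n, r_n) there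
exists a generic pair over ℂ: an acyclic complex of that format over some commutative
ℂ-algebra which specializes (not necessarily uniquely) to every acyclic complex of that
format over any commutative ℂ-algebra.
-/

/-- A complex `0 → R^{f n} → ⋯ → R^{f 1} → R^{f 0}` of finite free `R`-modules, encoded by
its matrices of differentials; `d k` is the matrix of the differential `F_{k+1} → F_k`.
(A format of length `n` is encoded by a function `f : ℕ → ℕ` vanishing above `n`.) -/
structure MatrixComplex (R : Type) [CommRing R] (f : ℕ → ℕ) where
  d : ∀ k : ℕ, Matrix (Fin (f k)) (Fin (f (k + 1))) R
  comp_eq_zero : ∀ k : ℕ, d k * d (k + 1) = 0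

/-- Acyclicity: exactness at `F_k` for all `k = 1, …, n`. -/
def MatrixComplex.IsAcyclic {R : Type} [CommRing R] {f : ℕ → ℕ} (n : ℕ)
    (C : MatrixComplex R f) : Prop :=
  ∀ k : ℕ, k < n →
    LinearMap.ker (C.d k).mulVecLin = LinearMap.range (C.d (k + 1)).mulVecLin

/-- A ring homomorphism `φ : R → S` specializes `C` to `C'` if applying `φ` entrywise to the
differentials of `C` yields the differentials of `C'`. -/
def SpecializesCx {R S : Type} [CommRing R] [CommRing S] {f : ℕ → ℕ}
    (φ : R →+* S) (C : MatrixComplex R f) (C' : MatrixComplex S f) : Prop :=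
  ∀ k : ℕ, (C.d k).map φ = C'.d k

/-- A commutative ℂ-algebra equipped with a complex of finite free modules of format `f`. -/
structure AlgebraComplexPair (f : ℕ → ℕ) : Type 1 where
  carrier : Type
  [commRing : CommRing carrier]
  [algebra : Algebra ℂ carrier]
  complex : MatrixComplex carrier f

attribute [instance] AlgebraComplexPair.commRing AlgebraComplexPair.algebra

/-- The format `(r₀ + r₁, r₁ + r₂, …, r_{n-1} + r_n, r_n)` of length `n` determined by the
ranks `r 0, …, r n` of the differentials. -/
def brunsFormat (n : ℕ) (r : ℕ → ℕ) : ℕ → ℕ :=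
  fun k => if k < n then r k + r (k + 1) else if k = n then r n else 0

/-!
The generic pair is built as in Hochster's construction. Start from the generic complex: the
polynomial ring in the entries of matrices `d k`, modulo the entries of the products
`d k * d (k + 1)`. Then repeatedly adjoin to the current ring, for every cycle `z` in degree
`< n`, new indeterminates `y` subject to `d y = z`. The direct limit of this tower carries an
acyclic complex: a cycle over the limit comes from a finite stage, is already a cycle at some
later stage, and becomes a boundary one stage further. Conversely, an acyclic complex `G` over
`S` receives compatible maps from all stages: the generic entries go to the entries of `G`, and
the adjoined `y` can be sent to preimages in `G` because the image of a cycle is a cycle of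
`G`, hence a boundary.
-/

noncomputable section

open Matrix

namespace MatrixComplex

variable {R S : Type} [CommRing R] [CommRing S] {f : ℕ → ℕ}

def map (φ : R →+* S) (C : MatrixComplex R f) : MatrixComplex S f where
  d k := (C.d k).map φ
  comp_eq_zero k := by rw [← Matrix.map_mul, C.comp_eq_zero, Matrix.map_zero _ (map_zero φ)]

structure Cycle (n : ℕ) (C : MatrixComplex R f) where
  deg : ℕ
  deg_lt : deg < n
  vec : Fin (f (deg + 1)) → R
  mulVec_eq_zero : C.d deg *ᵥ vec = 0

theorem range_le_ker (C : MatrixComplex R f) (k : ℕ) :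
    LinearMap.range (C.d (k + 1)).mulVecLin ≤ LinearMap.ker (C.d k).mulVecLin := by
  rintro _ ⟨v, rfl⟩
  simp [C.comp_eq_zero]

theorem isAcyclic_iff {n : ℕ} {C : MatrixComplex R f} :
    C.IsAcyclic n ↔ ∀ k < n, ∀ z, C.d k *ᵥ z = 0 → ∃ y, C.d (k + 1) *ᵥ y = z := by
  exact forall₂_congr fun k _ =>
    ⟨fun h z hz => h.le hz, fun h => le_antisymm (fun z hz => h z hz) (C.range_le_ker k)⟩

end MatrixComplex

section SpecializesCx

variable {R S T : Type} [CommRing R] [CommRing S] [CommRing T] {f : ℕ → ℕ}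
  {φ : R →+* S} {C : MatrixComplex R f} {G : MatrixComplex S f}

theorem specializesCx_map (φ : R →+* S) (C : MatrixComplex R f) :
    SpecializesCx φ C (C.map φ) := fun _ => rfl

theorem specializesCx_map_iff {ψ : S →+* T} {H : MatrixComplex T f} :
    SpecializesCx ψ (C.map φ) H ↔ SpecializesCx (ψ.comp φ) C H := by
  simp only [SpecializesCx, MatrixComplex.map, Matrix.map_map]
  rfl

theorem SpecializesCx.map_of_comp_eq {ι : R →+* S} {ψ : S →+* T} {χ : R →+* T}
    {H : MatrixComplex T f} (hχ : SpecializesCx χ C H) (h : ψ.comp ι = χ) :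
    SpecializesCx ψ (C.map ι) H :=
  specializesCx_map_iff.2 (h ▸ hχ)

theorem SpecializesCx.comp {ψ : S →+* T} {H : MatrixComplex T f}
    (hφ : SpecializesCx φ C G) (hψ : SpecializesCx ψ G H) : SpecializesCx (ψ.comp φ) C H := by
  intro k
  rw [← hψ k, ← hφ k, Matrix.map_map]
  rfl

theorem SpecializesCx.mulVec_comp (hφ : SpecializesCx φ C G) (k : ℕ)
    (v : Fin (f (k + 1)) → R) : G.d k *ᵥ (φ ∘ v) = φ ∘ (C.d k *ᵥ v) := by
  rw [← hφ k]
  ext i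
  exact (RingHom.map_mulVec φ _ v i).symm

theorem SpecializesCx.exists_mulVec_eq_comp {n : ℕ} (hφ : SpecializesCx φ C G)
    (hG : G.IsAcyclic n) (c : C.Cycle n) : ∃ y, G.d (c.deg + 1) *ᵥ y = φ ∘ c.vec := by
  refine MatrixComplex.isAcyclic_iff.1 hG c.deg c.deg_lt _ ?_
  rw [hφ.mulVec_comp, c.mulVec_eq_zero]
  exact funext fun _ => map_zero φ

end SpecializesCx

section NatTower

variable {K : Type*} [CommSemiring K] {A : ℕ → Type*} [∀ m, Semiring (A m)]
  [∀ m, Algebra K (A m)] (s : ∀ m, A m →ₐ[K] A (m + 1))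

def AlgHom.natLERec (i j : ℕ) (h : i ≤ j) : A i →ₐ[K] A j :=
  Nat.leRecOn h (fun g => (s _).comp g) (AlgHom.id K _)

theorem AlgHom.natLERec_self (i : ℕ) : AlgHom.natLERec s i i le_rfl = AlgHom.id K (A i) :=
  Nat.leRecOn_self _

theorem AlgHom.natLERec_succ_right {i j : ℕ} (h : i ≤ j) :
    AlgHom.natLERec s i (j + 1) (h.trans j.le_succ) = (s j).comp (AlgHom.natLERec s i j h) :=
  Nat.leRecOn_succ h _

theorem AlgHom.natLERec_succ (m : ℕ) : AlgHom.natLERec s m (m + 1) m.le_succ = s m := by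
  rw [AlgHom.natLERec_succ_right s le_rfl, AlgHom.natLERec_self, AlgHom.comp_id]

theorem AlgHom.natLERec_apply {i j : ℕ} (h : i ≤ j) (x : A i) :
    AlgHom.natLERec s i j h x = Nat.leRecOn h (fun {k} => s k) x := by
  induction j, h using Nat.le_induction with
  | base => rw [AlgHom.natLERec_self, Nat.leRecOn_self, AlgHom.id_apply]
  | succ j hij ih => rw [AlgHom.natLERec_succ_right s hij, Nat.leRecOn_succ hij, ← ih, comp_apply]

instance AlgHom.directedSystem_natLERec :
    DirectedSystem A fun i j h => AlgHom.natLERec s i j h where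
  map_self i x := by rw [AlgHom.natLERec_self, AlgHom.id_apply]
  map_map k j i hij hjk x := by simp only [AlgHom.natLERec_apply, ← Nat.leRecOn_trans]

theorem AlgHom.comp_natLERec {B : Type*} [Semiring B] [Algebra K B] (φ : ∀ m, A m →ₐ[K] B)
    (hφ : ∀ m, (φ (m + 1)).comp (s m) = φ m) {i j : ℕ} (h : i ≤ j) :
    (φ j).comp (AlgHom.natLERec s i j h) = φ i := by
  induction j, h using Nat.le_induction with
  | base => rw [AlgHom.natLERec_self, AlgHom.comp_id]
  | succ j hij ih => rw [AlgHom.natLERec_succ_right s hij, ← AlgHom.comp_assoc, hφ, ih]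

end NatTower

namespace DirectLimit

variable {ι : Type*} [Preorder ι] [IsDirectedOrder ι] [Nonempty ι] {G : ι → Type*}
  {T : ∀ ⦃i j : ι⦄, i ≤ j → Type*} {f : ∀ i j (h : i ≤ j), T h}
  [∀ i j (h : i ≤ j), FunLike (T h) (G i) (G j)] [DirectedSystem G (f · · ·)]
  {κ : Type*} [Finite κ]

theorem exists_forall_eq_mk (v : κ → DirectLimit G f) :
    ∃ i, ∃ w : κ → G i, ∀ a, v a = ⟦⟨i, w a⟩⟧ := by
  choose j x hx using fun a => exists_eq_mk f (v a)
  obtain ⟨i, hi⟩ := Finite.exists_le j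
  exact ⟨i, fun a => f _ _ (hi a) (x a), fun a => by rw [hx, mk_apply]⟩

theorem exists_comp_eq_zero [∀ i, Zero (G i)] [∀ i j h, ZeroHomClass (T h) (G i) (G j)] {i : ι}
    (w : κ → G i) (hw : ∀ a, (⟦⟨i, w a⟩⟧ : DirectLimit G f) = 0) :
    ∃ j, ∃ h : i ≤ j, f i j h ∘ w = 0 := by
  choose j hj hzero using fun a => (exists_eq_zero _).1 (hw a)
  obtain ⟨k, hik, hk⟩ : ∃ k, i ≤ k ∧ ∀ a, j a ≤ k := by
    obtain ⟨k, hk⟩ := Finite.exists_le (Option.elim · i j)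
    exact ⟨k, hk none, fun a => hk (some a)⟩
  refine ⟨k, hik, funext fun a => ?_⟩
  rw [Function.comp_apply, ← DirectedSystem.map_map' f (hj a) (hk a), hzero, map_zero]
  rfl

end DirectLimit

namespace GenericPair

open MvPolynomial

section Base

variable (f : ℕ → ℕ)

def BaseVar : Type := Σ k : ℕ, Fin (f k) × Fin (f (k + 1))

def genericMatrix (k : ℕ) : Matrix (Fin (f k)) (Fin (f (k + 1))) (MvPolynomial (BaseVar f) ℂ) :=
  Matrix.of fun i j => X ⟨k, i, j⟩

def baseIdeal : Ideal (MvPolynomial (BaseVar f) ℂ) :=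
  Ideal.span {p | ∃ k i l, (genericMatrix f k * genericMatrix f (k + 1)) i l = p}

def basePair : AlgebraComplexPair f where
  carrier := MvPolynomial (BaseVar f) ℂ ⧸ baseIdeal f
  complex :=
    { d := fun k => (genericMatrix f k).map (Ideal.Quotient.mk _)
      comp_eq_zero := fun k => by
        rw [← Matrix.map_mul]
        ext i l
        exact Ideal.Quotient.eq_zero_iff_mem.2 (Ideal.subset_span ⟨k, i, l, rfl⟩) }

variable {f}

theorem exists_basePair_lift {S : Type} [CommRing S] [Algebra ℂ S] (G : MatrixComplex S f) :
    ∃ φ : (basePair f).carrier →ₐ[ℂ] S, SpecializesCx φ (basePair f).complex G := by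
  let ψ : MvPolynomial (BaseVar f) ℂ →ₐ[ℂ] S := aeval fun v => G.d v.1 v.2.1 v.2.2
  have hψ (k : ℕ) : (genericMatrix f k).map ψ = G.d k := by
    ext i j
    exact aeval_X _ _
  have hker : baseIdeal f ≤ RingHom.ker ψ := by
    refine Ideal.span_le.2 ?_
    rintro _ ⟨k, i, l, rfl⟩
    change (genericMatrix f k * genericMatrix f (k + 1)).map ψ i l = 0
    rw [Matrix.map_mul, hψ, hψ, G.comp_eq_zero, Matrix.zero_apply]
  refine ⟨Ideal.Quotient.liftₐ _ ψ hker, fun k => ?_⟩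
  rw [← hψ k]
  rfl

end Base

section KillCycles

variable {f : ℕ → ℕ} (n : ℕ) (P : AlgebraComplexPair f)

def WitnessVar : Type := Σ c : P.complex.Cycle n, Fin (f (c.deg + 2))

def witness (c : P.complex.Cycle n) :
    Fin (f (c.deg + 2)) → MvPolynomial (WitnessVar n P) P.carrier :=
  fun j => X ⟨c, j⟩

def killCyclesIdeal : Ideal (MvPolynomial (WitnessVar n P) P.carrier) :=
  Ideal.span {p | ∃ c : P.complex.Cycle n, ∃ i,
    ((P.complex.d (c.deg + 1)).map C *ᵥ witness n P c) i - C (c.vec i) = p}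

def toKillCycles :
    P.carrier →ₐ[ℂ] MvPolynomial (WitnessVar n P) P.carrier ⧸ killCyclesIdeal n P :=
  (Ideal.Quotient.mkₐ ℂ _).comp (IsScalarTower.toAlgHom ℂ P.carrier _)

def killCycles : AlgebraComplexPair f where
  carrier := MvPolynomial (WitnessVar n P) P.carrier ⧸ killCyclesIdeal n P
  complex := P.complex.map (toKillCycles n P)

theorem killCycles_exists_mulVec_eq (c : P.complex.Cycle n) :
    ∃ y, (killCycles n P).complex.d (c.deg + 1) *ᵥ y = toKillCycles n P ∘ c.vec := by
  refine ⟨Ideal.Quotient.mk _ ∘ witness n P c, funext fun i => ?_⟩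
  refine (RingHom.map_mulVec _ ((P.complex.d (c.deg + 1)).map C) _ i).symm.trans ?_
  exact Ideal.Quotient.eq.2 (Ideal.subset_span ⟨c, i, rfl⟩)

theorem exists_killCycles_lift {S : Type} [CommRing S] [Algebra ℂ S] {G : MatrixComplex S f}
    (hG : G.IsAcyclic n) {φ : P.carrier →ₐ[ℂ] S} (hφ : SpecializesCx φ P.complex G) :
    ∃ ψ : (killCycles n P).carrier →ₐ[ℂ] S, ψ.comp (toKillCycles n P) = φ := by
  choose y hy using hφ.exists_mulVec_eq_comp hG
  let Ψ : MvPolynomial (WitnessVar n P) P.carrier →ₐ[ℂ] S := aevalTower φ fun v => y v.1 v.2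
  have hker : killCyclesIdeal n P ≤ RingHom.ker Ψ := by
    refine Ideal.span_le.2 ?_
    rintro _ ⟨c, i, rfl⟩
    have hΨ : ((P.complex.d (c.deg + 1)).map C).map Ψ = G.d (c.deg + 1) := by
      rw [Matrix.map_map, ← hφ]
      ext
      exact aevalTower_C _ _ _
    have hwit : Ψ ∘ witness n P c = y c := funext fun j => aevalTower_X _ _ _
    have hmul :=
      RingHom.map_mulVec (Ψ : _ →+* S) ((P.complex.d (c.deg + 1)).map C) (witness n P c) i
    rw [AlgHom.coe_toRingHom] at hmul
    rw [SetLike.mem_coe, RingHom.mem_ker, map_sub, sub_eq_zero, hmul, hΨ, hwit, hy]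
    exact (aevalTower_C _ _ _).symm
  exact ⟨Ideal.Quotient.liftₐ _ Ψ hker, AlgHom.ext fun x => aevalTower_C _ _ x⟩

end KillCycles

section Limit

variable (f : ℕ → ℕ) (n : ℕ)

def stage : ℕ → AlgebraComplexPair f
  | 0 => basePair f
  | m + 1 => killCycles n (stage m)

abbrev stageMap (m : ℕ) : (stage f n m).carrier →ₐ[ℂ] (stage f n (m + 1)).carrier :=
  toKillCycles n (stage f n m)

abbrev Limit : Type := DirectLimit (fun m => (stage f n m).carrier) (AlgHom.natLERec (stageMap f n))

abbrev ofStage (m : ℕ) : (stage f n m).carrier →ₐ[ℂ] Limit f n :=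
  DirectLimit.Algebra.of (fun m => (stage f n m).carrier) (AlgHom.natLERec (stageMap f n)) m

abbrev limitPair : AlgebraComplexPair f where
  carrier := Limit f n
  complex := (stage f n 0).complex.map (ofStage f n 0)

variable {f n}

theorem specializesCx_natLERec {i j : ℕ} (h : i ≤ j) :
    SpecializesCx (AlgHom.natLERec (stageMap f n) i j h) (stage f n i).complex
      (stage f n j).complex := by
  induction j, h using Nat.le_induction with
  | base => rw [AlgHom.natLERec_self (stageMap f n)]; exact fun _ => rfl
  | succ j hij ih =>
    rw [AlgHom.natLERec_succ_right _ hij]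
    exact ih.comp (specializesCx_map (stageMap f n j).toRingHom (stage f n j).complex)

theorem specializesCx_ofStage (m : ℕ) :
    SpecializesCx (ofStage f n m) (stage f n m).complex (limitPair f n).complex := by
  intro k
  rw [← specializesCx_natLERec (Nat.zero_le m) k, Matrix.map_map]
  congr 1
  funext x
  exact DirectLimit.Algebra.of_f _ _

theorem limitPair_isAcyclic : (limitPair f n).complex.IsAcyclic n := by
  refine MatrixComplex.isAcyclic_iff.2 fun k hk z hz => ?_
  obtain ⟨m, w, hw⟩ := DirectLimit.exists_forall_eq_mk z
  obtain rfl : z = ofStage f n m ∘ w := funext hw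
  obtain ⟨M, hmM, hM⟩ := DirectLimit.exists_comp_eq_zero (G := fun m => (stage f n m).carrier)
    (f := AlgHom.natLERec (stageMap f n)) ((stage f n m).complex.d k *ᵥ w)
    fun a => congrFun (((specializesCx_ofStage m).mulVec_comp k w).symm.trans hz) a
  let c : (stage f n M).complex.Cycle n :=
    ⟨k, hk, AlgHom.natLERec (stageMap f n) m M hmM ∘ w,
      ((specializesCx_natLERec hmM).mulVec_comp k w).trans hM⟩
  obtain ⟨y, hy⟩ := killCycles_exists_mulVec_eq n _ c
  refine ⟨ofStage f n (M + 1) ∘ y, ?_⟩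
  calc (limitPair f n).complex.d (k + 1) *ᵥ (ofStage f n (M + 1) ∘ y)
      = ofStage f n (M + 1) ∘ ((stage f n (M + 1)).complex.d (k + 1) *ᵥ y) :=
        (specializesCx_ofStage (M + 1)).mulVec_comp (k + 1) y
    _ = ofStage f n (M + 1) ∘ stageMap f n M ∘ AlgHom.natLERec (stageMap f n) m M hmM ∘ w :=
        congrArg (ofStage f n (M + 1) ∘ ·) hy
    _ = ofStage f n m ∘ w := by
        ext a
        simp only [Function.comp_apply, ← AlgHom.natLERec_succ (stageMap f n) M]
        rw [DirectLimit.Algebra.of_f, DirectLimit.Algebra.of_f]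

end Limit

section Lift

variable {f : ℕ → ℕ} {n : ℕ} {S : Type} [CommRing S] [Algebra ℂ S] {G : MatrixComplex S f}

def stageLift (hG : G.IsAcyclic n) :
    ∀ m, {φ : (stage f n m).carrier →ₐ[ℂ] S // SpecializesCx φ (stage f n m).complex G}
  | 0 => ⟨_, (exists_basePair_lift G).choose_spec⟩
  | m + 1 =>
    have h := exists_killCycles_lift n _ hG (stageLift hG m).2
    ⟨h.choose, (stageLift hG m).2.map_of_comp_eq (congrArg AlgHom.toRingHom h.choose_spec)⟩

theorem stageLift_comp_stageMap (hG : G.IsAcyclic n) (m : ℕ) :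
    (stageLift hG (m + 1)).1.comp (stageMap f n m) = (stageLift hG m).1 := by
  rw [stageLift]
  exact (exists_killCycles_lift n _ hG (stageLift hG m).2).choose_spec

theorem exists_limitPair_lift (hG : G.IsAcyclic n) :
    ∃ φ : (limitPair f n).carrier →ₐ[ℂ] S, SpecializesCx φ (limitPair f n).complex G := by
  have hcompat {i j : ℕ} (h : i ≤ j) := AlgHom.comp_natLERec (stageMap f n)
    (fun m => (stageLift hG m).1) (stageLift_comp_stageMap hG) h
  let φ := DirectLimit.Algebra.lift _ (AlgHom.natLERec (stageMap f n)) S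
    (fun m => (stageLift hG m).1) fun i j h => DFunLike.congr_fun (hcompat h)
  exact ⟨φ, specializesCx_map_iff.2 (stageLift hG 0).2⟩

end Lift

end GenericPair

end

theorem bruns_generic_pair_exists_general (n : ℕ) (r : ℕ → ℕ) :
    ∃ U : AlgebraComplexPair (brunsFormat n r),
      U.complex.IsAcyclic n ∧
      ∀ (S : Type) (_ : CommRing S) (_ : Algebra ℂ S)
        (G : MatrixComplex S (brunsFormat n r)),
        G.IsAcyclic n →
        ∃ φ : U.carrier →ₐ[ℂ] S, SpecializesCx (φ : U.carrier →+* S) U.complex G :=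
  ⟨_, GenericPair.limitPair_isAcyclic, fun _ _ _ _ hG => GenericPair.exists_limitPair_lift hG⟩

theorem bruns_generic_pair_exists (n : ℕ) (hn : 1 ≤ n) (r : ℕ → ℕ) :
    ∃ U : AlgebraComplexPair (brunsFormat n r),
      U.complex.IsAcyclic n ∧
      ∀ (S : Type) (_ : CommRing S) (_ : Algebra ℂ S)
        (G : MatrixComplex S (brunsFormat n r)),
        G.IsAcyclic n →
        ∃ φ : U.carrier →ₐ[ℂ] S, SpecializesCx (φ : U.carrier →+* S) U.complex G :=
  bruns_generic_pair_exists_general n r
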